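/- Let Σ, Σ̂ be n×n positive semidefinite symmetric matrices with Gelbrich distance G(Σ, Σ̂) ≤ ε. Then λ_max(Σ + Σ̂ + 2(Σ̂^{1/2} Σ Σ̂^{1/2})^{1/2}) ≤ (2λ_max(Σ̂)^{1/2} + ε)², and consequently G(Σ, Σ̂) ≥ ‖Σ − Σ̂‖_F / (2λ_max(Σ̂)^{1/2} + ε). -/

import Mathlib

open Matrix

section OldSqrt

open scoped ComplexOrder

/-- The positive semidefinite square root, as `Matrix.PosSemidef.sqrt` was defined in Mathlib of
December 2024 (since removed in favour of `CFC.sqrt`). -/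
noncomputable def Matrix.PosSemidef.sqrt {n 𝕜 : Type*} [Fintype n] [RCLike 𝕜] [DecidableEq n]
    {A : Matrix n n 𝕜} (hA : A.PosSemidef) : Matrix n n 𝕜 :=
  hA.1.eigenvectorUnitary.1 * diagonal ((↑) ∘ (√·) ∘ hA.1.eigenvalues) *
    (star hA.1.eigenvectorUnitary : Matrix n n 𝕜)

end OldSqrt

/-- Frobenius norm. -/
noncomputable def frobNorm {n : ℕ} (A : Matrix (Fin n) (Fin n) ℝ) : ℝ :=
  Real.sqrt ((Aᵀ * A).trace)

/-!
Write `A = Σ^{1/2}`, `B = Σ̂^{1/2}` and let `U` be the orthogonal polar factor of `AB`, so that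
`Uᵀ A B = (B Σ B)^{1/2}`. Expanding the trace shows `G(Σ, Σ̂) = ‖D‖_F` for `D = AU - B`, and the
spectral norms are `‖A‖ = √λ_max(Σ)`, `‖B‖ = √λ_max(Σ̂)`, `‖D‖ ≤ ‖D‖_F`. From `AU = B + D` we get
`‖A‖ ≤ ‖B‖ + G`. The quadratic form of `Σ + Σ̂ + 2 Uᵀ A B` is `‖Ax‖² + ‖Bx‖² + 2⟪AUx, Bx⟫`, at
most `(‖A‖ + ‖B‖)² ‖x‖²`, and `Σ - Σ̂ = B Dᵀ + D (AU)ᵀ` gives `‖Σ - Σ̂‖_F ≤ (‖A‖ + ‖B‖) ‖D‖_F`.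
Both bounds then follow from `‖A‖ + ‖B‖ ≤ 2‖B‖ + G ≤ 2√λ_max(Σ̂) + ε`.
-/

open scoped RealInnerProductSpace

section Euclidean

variable {ι : Type*} [Fintype ι]

lemma dotProduct_self_nonneg (x : ι → ℝ) : 0 ≤ x ⬝ᵥ x :=
  Finset.sum_nonneg fun i _ => mul_self_nonneg (x i)

lemma sqrt_dotProduct_self_eq_norm (x : ι → ℝ) : √(x ⬝ᵥ x) = ‖WithLp.toLp 2 x‖ := by
  rw [norm_eq_sqrt_real_inner, EuclideanSpace.inner_eq_star_dotProduct, star_trivial]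

lemma dotProduct_le_sqrt_mul_sqrt (x y : ι → ℝ) : x ⬝ᵥ y ≤ √(x ⬝ᵥ x) * √(y ⬝ᵥ y) := by
  rw [sqrt_dotProduct_self_eq_norm, sqrt_dotProduct_self_eq_norm, dotProduct_comm]
  simpa [EuclideanSpace.inner_eq_star_dotProduct] using
    real_inner_le_norm (WithLp.toLp 2 x) (WithLp.toLp 2 y)

lemma sqrt_dotProduct_add_le (x y : ι → ℝ) :
    √((x + y) ⬝ᵥ (x + y)) ≤ √(x ⬝ᵥ x) + √(y ⬝ᵥ y) := by
  simpa only [sqrt_dotProduct_self_eq_norm, WithLp.toLp_add] using norm_add_le _ _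

lemma sqrt_le_mul_sqrt_iff {a b c : ℝ} (hb : 0 ≤ b) (hc : 0 ≤ c) :
    √a ≤ c * √b ↔ a ≤ c ^ 2 * b := by
  rw [← Real.sqrt_sq hc, ← Real.sqrt_mul (sq_nonneg c), Real.sqrt_sq hc]
  exact Real.sqrt_le_sqrt_iff (by positivity)

lemma dotProduct_mulVec_self_le_trace {m : Type*} [Fintype m] (X : Matrix m ι ℝ) (x : ι → ℝ) :
    (X *ᵥ x) ⬝ᵥ (X *ᵥ x) ≤ (Xᵀ * X).trace * (x ⬝ᵥ x) := by
  rw [trace_mul_comm, trace, Finset.sum_mul]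
  refine Finset.sum_le_sum fun i _ => ?_
  simpa only [mulVec, diag, mul_apply', transpose_apply, dotProduct, sq] using
    Finset.sum_mul_sq_le_sq_mul_sq Finset.univ (X i) x

lemma Matrix.IsSymm.dotProduct_mulVec_self {A : Matrix ι ι ℝ} (hA : A.IsSymm) (x : ι → ℝ) :
    (A *ᵥ x) ⬝ᵥ (A *ᵥ x) = x ⬝ᵥ ((A * A) *ᵥ x) := by
  rw [dotProduct_mulVec, vecMul_mulVec, ← dotProduct_mulVec, hA.eq]

variable [DecidableEq ι]

lemma dotProduct_mulVec_self_of_mem_orthogonalGroup {U : Matrix ι ι ℝ}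
    (hU : U ∈ orthogonalGroup ι ℝ) (x : ι → ℝ) : (U *ᵥ x) ⬝ᵥ (U *ᵥ x) = x ⬝ᵥ x := by
  rw [dotProduct_mulVec, vecMul_mulVec, (mem_orthogonalGroup_iff' ι ℝ).mp hU, vecMul_one]

open scoped MatrixOrder in
lemma Matrix.IsHermitian.forall_eigenvalues_le_iff {A : Matrix ι ι ℝ} (hA : A.IsHermitian)
    {c : ℝ} : (∀ i, hA.eigenvalues i ≤ c) ↔ ∀ x, x ⬝ᵥ (A *ᵥ x) ≤ c * (x ⬝ᵥ x) := by
  rw [← Set.forall_mem_range (p := (· ≤ c)), ← hA.spectrum_real_eq_range_eigenvalues,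
    ← le_algebraMap_iff_spectrum_le hA.isSelfAdjoint, Matrix.le_iff,
    posSemidef_iff_dotProduct_mulVec]
  simp [sub_mulVec, dotProduct_sub, Algebra.algebraMap_eq_smul_one, smul_mulVec,
    (isSymm_one.smul c).sub (isHermitian_iff_isSymm.mp hA)]

lemma Matrix.IsHermitian.iSup_eigenvalues_le {A : Matrix ι ι ℝ} (hA : A.IsHermitian) {c : ℝ}
    (hc : 0 ≤ c) (h : ∀ x, x ⬝ᵥ (A *ᵥ x) ≤ c * (x ⬝ᵥ x)) : ⨆ i, hA.eigenvalues i ≤ c :=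
  Real.iSup_le (hA.forall_eigenvalues_le_iff.mpr h) hc

end Euclidean

section Frobenius

variable {n : ℕ}

lemma frobNorm_add_le (X Y : Matrix (Fin n) (Fin n) ℝ) :
    frobNorm (X + Y) ≤ frobNorm X + frobNorm Y := by
  simpa only [frobNorm, ← vec_dotProduct_vec, vec_add] using sqrt_dotProduct_add_le _ _

lemma frobNorm_transpose (X : Matrix (Fin n) (Fin n) ℝ) : frobNorm Xᵀ = frobNorm X := by
  rw [frobNorm, frobNorm, transpose_transpose, trace_mul_comm]

lemma frobNorm_mul_le {Y : Matrix (Fin n) (Fin n) ℝ} {c : ℝ} (hc : 0 ≤ c)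
    (hY : ∀ x, √((Y *ᵥ x) ⬝ᵥ (Y *ᵥ x)) ≤ c * √(x ⬝ᵥ x)) (X : Matrix (Fin n) (Fin n) ℝ) :
    frobNorm (Y * X) ≤ c * frobNorm X := by
  have hcols (Z : Matrix (Fin n) (Fin n) ℝ) : (Zᵀ * Z).trace = ∑ j, Z.col j ⬝ᵥ Z.col j := rfl
  rw [frobNorm, frobNorm, hcols, hcols,
    sqrt_le_mul_sqrt_iff (Finset.sum_nonneg fun j _ => dotProduct_self_nonneg _) hc, Finset.mul_sum]
  refine Finset.sum_le_sum fun j _ => ?_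
  have hcol : (Y * X).col j = Y *ᵥ X.col j := by
    ext i; simp [mul_apply, mulVec, dotProduct]
  rw [hcol, ← sqrt_le_mul_sqrt_iff (dotProduct_self_nonneg _) hc]
  exact hY _

end Frobenius

theorem exists_orthonormalBasis_norm_smul_eq {E ι : Type*} [NormedAddCommGroup E]
    [InnerProductSpace ℝ E] [FiniteDimensional ℝ E] [Fintype ι]
    (hcard : Module.finrank ℝ E = Fintype.card ι)
    {v : ι → E} (hv : Pairwise fun i j => ⟪v i, v j⟫ = 0) :
    ∃ c : OrthonormalBasis ι ℝ E, ∀ i, v i = ‖v i‖ • c i := by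
  set s : Set ι := {i | v i ≠ 0}
  have hw : Orthonormal ℝ (s.domRestrict fun i => ‖v i‖⁻¹ • v i) := by
    refine ⟨fun ⟨i, hi⟩ => ?_, fun ⟨i, _⟩ ⟨j, _⟩ hij => ?_⟩
    · simp [norm_smul, inv_mul_cancel₀ (norm_ne_zero_iff.mpr hi)]
    · simp [real_inner_smul_left, real_inner_smul_right, hv (Subtype.coe_ne_coe.mpr hij)]
  obtain ⟨c, hc⟩ := hw.exists_orthonormalBasis_extension_of_card_eq hcard
  refine ⟨c, fun i => ?_⟩
  by_cases hi : v i = 0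
  · simp [hi]
  · rw [hc i hi, smul_smul, mul_inv_cancel₀ (norm_ne_zero_iff.mpr hi), one_smul]

section Polar

variable {ι : Type*} [Fintype ι] [DecidableEq ι]

lemma Matrix.PosSemidef.sqrt_mulVec_eigenvectorBasis {M : Matrix ι ι ℝ} (hM : M.PosSemidef)
    (j : ι) : hM.sqrt *ᵥ ⇑(hM.1.eigenvectorBasis j)
      = √(hM.1.eigenvalues j) • ⇑(hM.1.eigenvectorBasis j) := by
  rw [Matrix.PosSemidef.sqrt, ← mulVec_mulVec, ← mulVec_mulVec,
    IsHermitian.star_eigenvectorUnitary_mulVec, diagonal_mulVec_single, ← smul_eq_mul,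
    Pi.single_smul, mulVec_smul, IsHermitian.eigenvectorUnitary_mulVec]
  rfl

lemma exists_mem_orthogonalGroup_mulVec_eq (b c : OrthonormalBasis ι ℝ (EuclideanSpace ℝ ι)) :
    ∃ U ∈ orthogonalGroup ι ℝ, ∀ j, U *ᵥ ⇑(b j) = ⇑(c j) := by
  set toMat := fun a : OrthonormalBasis ι ℝ (EuclideanSpace ℝ ι) =>
    (EuclideanSpace.basisFun ι ℝ).toBasis.toMatrix a.toBasis
  have hmem a : toMat a ∈ unitaryGroup ι ℝ :=
    (EuclideanSpace.basisFun ι ℝ).toMatrix_orthonormalBasis_mem_unitary a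
  have hcol a j : toMat a *ᵥ Pi.single j 1 = ⇑(a j) := by
    rw [mulVec_single_one]; rfl
  refine ⟨toMat c * star (toMat b), mul_mem (hmem c) (Unitary.star_mem (hmem b)), fun j => ?_⟩
  rw [← hcol b j, mulVec_mulVec, Matrix.mul_assoc, Unitary.star_mul_self_of_mem (hmem b),
    Matrix.mul_one, hcol]

/- Polar decomposition: `U` maps the eigenvector `b j` of `M = CᵀC` to `C (b j) / √(μ j)`,
completed to an orthonormal basis where `μ j = 0`. -/
theorem exists_mem_orthogonalGroup_eq_mul_sqrt {C M : Matrix ι ι ℝ} (hM : M.PosSemidef)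
    (hCM : Cᵀ * C = M) : ∃ U ∈ orthogonalGroup ι ℝ, C = U * hM.sqrt := by
  set b := hM.1.eigenvectorBasis
  set v := fun i => WithLp.toLp 2 (C *ᵥ ⇑(b i))
  have hv i j : ⟪v i, v j⟫ = hM.1.eigenvalues i * ⟪b i, b j⟫ := by
    simp only [v, EuclideanSpace.inner_eq_star_dotProduct, star_trivial]
    rw [dotProduct_mulVec, vecMul_mulVec, ← dotProduct_mulVec, hCM, hM.1.mulVec_eigenvectorBasis,
      dotProduct_smul, smul_eq_mul]
  obtain ⟨c, hc⟩ := exists_orthonormalBasis_norm_smul_eq finrank_euclideanSpace (v := v)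
    fun i j hij => by simp only; rw [hv, b.orthonormal.2 hij, mul_zero]
  obtain ⟨U, hU, hUbc⟩ := exists_mem_orthogonalGroup_mulVec_eq b c
  refine ⟨U, hU, toEuclideanLin.injective (b.toBasis.ext fun j => ?_)⟩
  have hnorm : ‖v j‖ = √(hM.1.eigenvalues j) := by
    rw [norm_eq_sqrt_real_inner, hv, real_inner_self_eq_norm_sq, b.orthonormal.1, one_pow, mul_one]
  simp only [OrthonormalBasis.coe_toBasis, toLpLin_apply, ← mulVec_mulVec]
  rw [hM.sqrt_mulVec_eigenvectorBasis, mulVec_smul, hUbc, ← hnorm]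
  exact congrArg (WithLp.toLp 2) (congrArg WithLp.ofLp (hc j))

end Polar

section SquareRoot

variable {ι : Type*} [Fintype ι] [DecidableEq ι] {S : Matrix ι ι ℝ}

open scoped MatrixOrder in
lemma Matrix.PosSemidef.sqrt_eq_cfcSqrt (hS : S.PosSemidef) : hS.sqrt = CFC.sqrt S := by
  rw [CFC.sqrt_eq_real_sqrt S hS.nonneg, cfcₙ_eq_cfc, hS.1.cfc_eq, IsHermitian.cfc,
    Unitary.conjStarAlgAut_apply]
  rfl

open scoped MatrixOrder in
lemma Matrix.PosSemidef.sqrt_mul_self (hS : S.PosSemidef) : hS.sqrt * hS.sqrt = S := by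
  rw [hS.sqrt_eq_cfcSqrt, CFC.sqrt_mul_sqrt_self S hS.nonneg]

open scoped MatrixOrder in
lemma Matrix.PosSemidef.isSymm_sqrt (hS : S.PosSemidef) : hS.sqrt.IsSymm := by
  rw [hS.sqrt_eq_cfcSqrt, ← isHermitian_iff_isSymm]
  exact (nonneg_iff_posSemidef.mp (CFC.sqrt_nonneg S)).isHermitian

lemma Matrix.PosSemidef.sqrt_dotProduct_sqrt_mulVec_le (hS : S.PosSemidef) (x : ι → ℝ) :
    √((hS.sqrt *ᵥ x) ⬝ᵥ (hS.sqrt *ᵥ x)) ≤ √(⨆ i, hS.isHermitian.eigenvalues i) * √(x ⬝ᵥ x) := by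
  have hle i : hS.isHermitian.eigenvalues i ≤ ⨆ i, hS.isHermitian.eigenvalues i :=
    le_ciSup (Set.finite_range _).bddAbove i
  rw [sqrt_le_mul_sqrt_iff (dotProduct_self_nonneg x) (Real.sqrt_nonneg _),
    Real.sq_sqrt (Real.iSup_nonneg hS.eigenvalues_nonneg), hS.isSymm_sqrt.dotProduct_mulVec_self,
    hS.sqrt_mul_self]
  exact hS.isHermitian.forall_eigenvalues_le_iff.mp hle x

lemma Matrix.PosSemidef.sqrt_iSup_eigenvalues_le (hS : S.PosSemidef) {c : ℝ} (hc : 0 ≤ c)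
    (h : ∀ x, √((hS.sqrt *ᵥ x) ⬝ᵥ (hS.sqrt *ᵥ x)) ≤ c * √(x ⬝ᵥ x)) :
    √(⨆ i, hS.isHermitian.eigenvalues i) ≤ c := by
  refine Real.sqrt_le_iff.mpr ⟨hc, hS.isHermitian.iSup_eigenvalues_le (sq_nonneg c) fun x => ?_⟩
  rw [← hS.sqrt_mul_self, ← hS.isSymm_sqrt.dotProduct_mulVec_self,
    ← sqrt_le_mul_sqrt_iff (dotProduct_self_nonneg x) hc]
  exact h x

end SquareRoot

section Gelbrich

variable {ι : Type*} [Fintype ι] [DecidableEq ι] {A B U : Matrix ι ι ℝ}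

theorem exists_mem_orthogonalGroup_transpose_mul_sqrt_mul_sqrt {S Shat : Matrix ι ι ℝ}
    (hS : S.PosSemidef) (hShat : Shat.PosSemidef)
    (hM : (hShat.sqrt * S * hShat.sqrt).PosSemidef) :
    ∃ U ∈ orthogonalGroup ι ℝ, Uᵀ * hS.sqrt * hShat.sqrt = hM.sqrt := by
  obtain ⟨U, hU, hpolar⟩ := exists_mem_orthogonalGroup_eq_mul_sqrt hM
    (C := hS.sqrt * hShat.sqrt) (by
      conv_rhs => rw [← hS.sqrt_mul_self]
      rw [transpose_mul, hS.isSymm_sqrt.eq, hShat.isSymm_sqrt.eq]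
      simp only [Matrix.mul_assoc])
  refine ⟨U, hU, ?_⟩
  rw [Matrix.mul_assoc, hpolar, ← Matrix.mul_assoc, (mem_orthogonalGroup_iff' ι ℝ).mp hU,
    Matrix.one_mul]

theorem trace_mul_self_add_mul_self_sub_two_smul (hA : A.IsSymm) (hB : B.IsSymm)
    (hU : U ∈ orthogonalGroup ι ℝ) :
    (A * A + B * B - (2 : ℝ) • (Uᵀ * A * B)).trace = ((A * U - B)ᵀ * (A * U - B)).trace := by
  have hAA : (Uᵀ * A * (A * U)).trace = (A * A).trace := by
    rw [trace_mul_comm, ← Matrix.mul_assoc, Matrix.mul_assoc A U,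
      (mem_orthogonalGroup_iff ι ℝ).mp hU, Matrix.mul_one]
  have hBA : (B * (A * U)).trace = (Uᵀ * A * B).trace := by
    rw [← trace_transpose, transpose_mul, transpose_mul, hA.eq, hB.eq, Matrix.mul_assoc]
  rw [transpose_sub, transpose_mul, hA.eq, hB.eq, sub_mul, mul_sub, mul_sub]
  simp only [trace_sub, trace_add, trace_smul, hAA, hBA, smul_eq_mul]
  ring

lemma sqrt_dotProduct_mul_mulVec_le (hU : U ∈ orthogonalGroup ι ℝ) {a : ℝ}
    (hA : ∀ x, √((A *ᵥ x) ⬝ᵥ (A *ᵥ x)) ≤ a * √(x ⬝ᵥ x)) (x : ι → ℝ) :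
    √(((A * U) *ᵥ x) ⬝ᵥ ((A * U) *ᵥ x)) ≤ a * √(x ⬝ᵥ x) := by
  rw [← mulVec_mulVec, ← dotProduct_mulVec_self_of_mem_orthogonalGroup hU x]
  exact hA _

lemma sqrt_dotProduct_mulVec_le_add (hU : U ∈ orthogonalGroup ι ℝ) {b g : ℝ}
    (hB : ∀ x, √((B *ᵥ x) ⬝ᵥ (B *ᵥ x)) ≤ b * √(x ⬝ᵥ x))
    (hD : ∀ x, √(((A * U - B) *ᵥ x) ⬝ᵥ ((A * U - B) *ᵥ x)) ≤ g * √(x ⬝ᵥ x)) (x : ι → ℝ) :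
    √((A *ᵥ x) ⬝ᵥ (A *ᵥ x)) ≤ (b + g) * √(x ⬝ᵥ x) := by
  set u := Uᵀ *ᵥ x
  have hAx : A *ᵥ x = B *ᵥ u + (A * U - B) *ᵥ u := by
    rw [← add_mulVec, add_sub_cancel, mulVec_mulVec, Matrix.mul_assoc,
      (mem_orthogonalGroup_iff ι ℝ).mp hU, Matrix.mul_one]
  have hu : u ⬝ᵥ u = x ⬝ᵥ x :=
    dotProduct_mulVec_self_of_mem_orthogonalGroup (transpose_mem_unitaryGroup_iff.mpr hU) x
  calc √((A *ᵥ x) ⬝ᵥ (A *ᵥ x))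
      ≤ √((B *ᵥ u) ⬝ᵥ (B *ᵥ u)) + √(((A * U - B) *ᵥ u) ⬝ᵥ ((A * U - B) *ᵥ u)) := by
        rw [hAx]; exact sqrt_dotProduct_add_le _ _
    _ ≤ b * √(u ⬝ᵥ u) + g * √(u ⬝ᵥ u) := add_le_add (hB u) (hD u)
    _ = (b + g) * √(x ⬝ᵥ x) := by rw [hu, add_mul]

theorem dotProduct_mulVec_add_two_smul_le (hA : A.IsSymm) (hB : B.IsSymm)
    (hU : U ∈ orthogonalGroup ι ℝ) {a b : ℝ}
    (hAa : ∀ x, √((A *ᵥ x) ⬝ᵥ (A *ᵥ x)) ≤ a * √(x ⬝ᵥ x))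
    (hBb : ∀ x, √((B *ᵥ x) ⬝ᵥ (B *ᵥ x)) ≤ b * √(x ⬝ᵥ x)) (x : ι → ℝ) :
    x ⬝ᵥ ((A * A + B * B + (2 : ℝ) • (Uᵀ * A * B)) *ᵥ x) ≤ (a + b) ^ 2 * (x ⬝ᵥ x) := by
  have hcross : x ⬝ᵥ ((Uᵀ * A * B) *ᵥ x) = ((A * U) *ᵥ x) ⬝ᵥ (B *ᵥ x) := by
    rw [← mulVec_mulVec, dotProduct_mulVec, ← transpose_transpose (Uᵀ * A), ← mulVec_transpose,
      transpose_mul, transpose_transpose, hA.eq, transpose_transpose]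
  have hAx := pow_le_pow_left₀ (Real.sqrt_nonneg _) (hAa x) 2
  have hBx := pow_le_pow_left₀ (Real.sqrt_nonneg _) (hBb x) 2
  have hcs := (dotProduct_le_sqrt_mul_sqrt ((A * U) *ᵥ x) (B *ᵥ x)).trans <|
    mul_le_mul (sqrt_dotProduct_mul_mulVec_le hU hAa x) (hBb x) (Real.sqrt_nonneg _)
      ((Real.sqrt_nonneg _).trans (hAa x))
  rw [add_mulVec, add_mulVec, smul_mulVec, dotProduct_add, dotProduct_add, dotProduct_smul,
    smul_eq_mul, hcross, ← hA.dotProduct_mulVec_self, ← hB.dotProduct_mulVec_self,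
    ← Real.sq_sqrt (dotProduct_self_nonneg (A *ᵥ x)),
    ← Real.sq_sqrt (dotProduct_self_nonneg (B *ᵥ x)), ← Real.sq_sqrt (dotProduct_self_nonneg x)]
  linarith

end Gelbrich

section GelbrichFrobenius

variable {n : ℕ} {A B U : Matrix (Fin n) (Fin n) ℝ}

lemma sqrt_dotProduct_mulVec_le_frobNorm (X : Matrix (Fin n) (Fin n) ℝ) (x : Fin n → ℝ) :
    √((X *ᵥ x) ⬝ᵥ (X *ᵥ x)) ≤ frobNorm X * √(x ⬝ᵥ x) := by
  rw [frobNorm, sqrt_le_mul_sqrt_iff (dotProduct_self_nonneg x) (Real.sqrt_nonneg _),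
    Real.sq_sqrt (by simpa only [← vec_dotProduct_vec] using dotProduct_self_nonneg X.vec)]
  exact dotProduct_mulVec_self_le_trace X x

theorem frobNorm_mul_self_sub_mul_self_le (hA : A.IsSymm) (hB : B.IsSymm)
    (hU : U ∈ orthogonalGroup (Fin n) ℝ) {a b : ℝ} (ha : 0 ≤ a) (hb : 0 ≤ b)
    (hAa : ∀ x, √((A *ᵥ x) ⬝ᵥ (A *ᵥ x)) ≤ a * √(x ⬝ᵥ x))
    (hBb : ∀ x, √((B *ᵥ x) ⬝ᵥ (B *ᵥ x)) ≤ b * √(x ⬝ᵥ x)) :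
    frobNorm (A * A - B * B) ≤ (a + b) * frobNorm (A * U - B) := by
  have hsplit : A * A - B * B = B * (A * U - B)ᵀ + (A * U * (A * U - B)ᵀ)ᵀ := by
    rw [transpose_mul, transpose_transpose, transpose_sub, transpose_mul, hA.eq, hB.eq,
      mul_sub, sub_mul, Matrix.mul_assoc A U, ← Matrix.mul_assoc U,
      (mem_orthogonalGroup_iff _ ℝ).mp hU, Matrix.one_mul]
    abel
  calc frobNorm (A * A - B * B)
      ≤ frobNorm (B * (A * U - B)ᵀ) + frobNorm (A * U * (A * U - B)ᵀ) := by
        rw [hsplit, ← frobNorm_transpose (A * U * _)]; exact frobNorm_add_le _ _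
    _ ≤ b * frobNorm (A * U - B) + a * frobNorm (A * U - B) := by
        rw [← frobNorm_transpose (A * U - B)]
        exact add_le_add (frobNorm_mul_le hb hBb _)
          (frobNorm_mul_le ha (sqrt_dotProduct_mul_mulVec_le hU hAa) _)
    _ = (a + b) * frobNorm (A * U - B) := by ring

end GelbrichFrobenius

theorem stmt_9_general {n : ℕ} (ε : ℝ) (S Shat : Matrix (Fin n) (Fin n) ℝ)
    (hS : S.PosSemidef) (hShat : Shat.PosSemidef)
    (hM : (hShat.sqrt * S * hShat.sqrt).PosSemidef)
    (hP : (S + Shat + (2 : ℝ) • hM.sqrt).IsHermitian)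
    (hG : Real.sqrt ((S + Shat - (2 : ℝ) • hM.sqrt).trace) ≤ ε) :
    (⨆ i, hP.eigenvalues i)
        ≤ (2 * Real.sqrt (⨆ i, hShat.isHermitian.eigenvalues i) + ε) ^ 2 ∧
    frobNorm (S - Shat) / (2 * Real.sqrt (⨆ i, hShat.isHermitian.eigenvalues i) + ε)
        ≤ Real.sqrt ((S + Shat - (2 : ℝ) • hM.sqrt).trace) := by
  obtain ⟨U, hU, hR⟩ := exists_mem_orthogonalGroup_transpose_mul_sqrt_mul_sqrt hS hShat hM
  have hA := hS.isSymm_sqrt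
  have hB := hShat.isSymm_sqrt
  have hAa := hS.sqrt_dotProduct_sqrt_mulVec_le
  have hBb := hShat.sqrt_dotProduct_sqrt_mulVec_le
  set a := √(⨆ i, hS.isHermitian.eigenvalues i)
  set b := √(⨆ i, hShat.isHermitian.eigenvalues i)
  set G := √((S + Shat - (2 : ℝ) • hM.sqrt).trace)
  have hGD : G = frobNorm (hS.sqrt * U - hShat.sqrt) := by
    rw [frobNorm, ← trace_mul_self_add_mul_self_sub_two_smul hA hB hU, hS.sqrt_mul_self,
      hShat.sqrt_mul_self, hR]
  have hb0 : 0 ≤ b := Real.sqrt_nonneg _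
  have hG0 : 0 ≤ G := Real.sqrt_nonneg _
  have hab : a ≤ b + G := hS.sqrt_iSup_eigenvalues_le (by positivity) <|
    sqrt_dotProduct_mulVec_le_add hU hBb fun x => hGD ▸ sqrt_dotProduct_mulVec_le_frobNorm _ x
  have hsum : a + b ≤ 2 * b + ε := by linarith
  constructor
  · have hquad := dotProduct_mulVec_add_two_smul_le hA hB hU hAa hBb
    rw [hS.sqrt_mul_self, hShat.sqrt_mul_self, hR] at hquad
    exact (hP.iSup_eigenvalues_le (sq_nonneg _) hquad).trans
      (pow_le_pow_left₀ (by positivity) hsum 2)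
  · have hfrob := frobNorm_mul_self_sub_mul_self_le hA hB hU (Real.sqrt_nonneg _)
      (Real.sqrt_nonneg _) hAa hBb
    rw [hS.sqrt_mul_self, hShat.sqrt_mul_self, ← hGD] at hfrob
    refine div_le_of_le_mul₀ (by linarith) hG0 ?_
    exact hfrob.trans ((mul_le_mul_of_nonneg_right hsum hG0).trans_eq (mul_comm _ _))

theorem stmt_9 {n : ℕ} (ε : ℝ) (hε : 0 ≤ ε) (S Shat : Matrix (Fin n) (Fin n) ℝ)
    (hS : S.PosSemidef) (hShat : Shat.PosSemidef)
    (hM : (hShat.sqrt * S * hShat.sqrt).PosSemidef)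
    (hP : (S + Shat + (2 : ℝ) • hM.sqrt).IsHermitian)
    (hG : Real.sqrt ((S + Shat - (2 : ℝ) • hM.sqrt).trace) ≤ ε) :
    (⨆ i, hP.eigenvalues i)
        ≤ (2 * Real.sqrt (⨆ i, hShat.isHermitian.eigenvalues i) + ε) ^ 2 ∧
    frobNorm (S - Shat) / (2 * Real.sqrt (⨆ i, hShat.isHermitian.eigenvalues i) + ε)
        ≤ Real.sqrt ((S + Shat - (2 : ℝ) • hM.sqrt).trace) :=
  stmt_9_general ε S Shat hS hShat hM hP hG
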